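/- In the free abelian group on symbols D_S (nonempty subsets S of a finite hole set) modulo the abelianized lantern relations, the classes of the pairwise generators D_{{α,β}} and single-hole generators D_{{α}} form a basis; consequently an element of the abelianized planar mapping class group is uniquely determined by its multiplicities {m_α, m_{αβ}}. -/

import Mathlib

/-- The free abelian group on convex Dehn twists `D_S`, indexed by nonempty subsets
`S` of a finite set `α` of holes. -/
abbrev TwistGroup (α : Type*) [DecidableEq α] : Type _ :=
  {S : Finset α // S.Nonempty} →₀ ℤ

/-- The generator `D_S` (zero if `S = ∅`). -/
noncomputable def Dg {α : Type*} [DecidableEq α] (S : Finset α) : TwistGroup α :=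
  if h : S.Nonempty then Finsupp.single ⟨S, h⟩ 1 else 0

/-- Abelianized lantern relators:
`D_{A∪B∪C} + D_A + D_B + D_C - D_{A∪B} - D_{B∪C} - D_{A∪C}`
for pairwise disjoint nonempty `A, B, C`. -/
noncomputable def lanternRelators (α : Type*) [DecidableEq α] : AddSubgroup (TwistGroup α) :=
  AddSubgroup.closure
    { x | ∃ A B C : Finset α, A.Nonempty ∧ B.Nonempty ∧ C.Nonempty ∧
        Disjoint A B ∧ Disjoint A C ∧ Disjoint B C ∧
        x = Dg (A ∪ B ∪ C) + Dg A + Dg B + Dg C - Dg (A ∪ B) - Dg (B ∪ C) - Dg (A ∪ C) }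

/-!
The multiplicity `m_U(S)` of `D_U` (`U` a hole or a pair of holes) in `D_S` is, as a function
of `S`, a sum `∑_{s ∈ S} v s + ∑_{s, t ∈ S} M s t`, and every such function satisfies the
lantern relation, since both sides expand into the same sums over `A`, `B`, `C` and their pairs. Hence the `m_U`
descend to the quotient, where they are dual to the classes of the `D_U`: these classes are
linearly independent. They span because a set `S` of at least three holes is `{a} ∪ {b} ∪ C`, and
the lantern relation expresses `D_S` through classes of strictly smaller sets.
-/

open Finset

section Lantern

variable {α β : Type*} [DecidableEq α] [AddCommMonoid β]

def SatisfiesLantern (f : Finset α → β) : Prop :=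
  ∀ ⦃A B C : Finset α⦄, Disjoint A B → Disjoint A C → Disjoint B C →
    f (A ∪ B ∪ C) + f A + f B + f C = f (A ∪ B) + f (B ∪ C) + f (A ∪ C)

theorem SatisfiesLantern.add {f g : Finset α → β} (hf : SatisfiesLantern f)
    (hg : SatisfiesLantern g) : SatisfiesLantern (f + g) := by
  intro A B C hAB hAC hBC
  calc f (A ∪ B ∪ C) + g (A ∪ B ∪ C) + (f A + g A) + (f B + g B) + (f C + g C)
      = (f (A ∪ B ∪ C) + f A + f B + f C) + (g (A ∪ B ∪ C) + g A + g B + g C) := by abel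
    _ = (f + g) (A ∪ B) + (f + g) (B ∪ C) + (f + g) (A ∪ C) := by
      rw [hf hAB hAC hBC, hg hAB hAC hBC, Pi.add_apply, Pi.add_apply, Pi.add_apply]; abel

theorem satisfiesLantern_sum (v : α → β) : SatisfiesLantern fun S => ∑ s ∈ S, v s := by
  intro A B C hAB hAC hBC
  simp only [sum_union hAB, sum_union hAC, sum_union hBC,
    sum_union (disjoint_union_left.2 ⟨hAC, hBC⟩)]
  abel

theorem satisfiesLantern_sum_sum (M : α → α → β) :
    SatisfiesLantern fun S => ∑ s ∈ S, ∑ t ∈ S, M s t := by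
  intro A B C hAB hAC hBC
  simp only [sum_union hAB, sum_union hAC, sum_union hBC,
    sum_union (disjoint_union_left.2 ⟨hAC, hBC⟩), sum_add_distrib]
  abel

theorem satisfiesLantern_pi {ι : Type*} {f : Finset α → ι → β}
    (hf : ∀ i, SatisfiesLantern (f · i)) : SatisfiesLantern f :=
  fun _ _ _ hAB hAC hBC => funext fun i => by simpa using hf i hAB hAC hBC

end Lantern

theorem Finset.exists_eq_union_of_two_lt_card {α : Type*} [DecidableEq α] {S : Finset α}
    (hS : 2 < S.card) : ∃ A B C : Finset α, A.Nonempty ∧ B.Nonempty ∧ C.Nonempty ∧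
      Disjoint A B ∧ Disjoint A C ∧ Disjoint B C ∧ A ∪ B ∪ C = S := by
  obtain ⟨a, ha, b, hb, c, hc, hab, hac, hbc⟩ := two_lt_card.1 hS
  refine ⟨{a}, {b}, S \ {a, b}, singleton_nonempty a, singleton_nonempty b,
    ⟨c, by simp [hc, hac.symm, hbc.symm]⟩, by simpa using hab, by simp, by simp, ?_⟩
  ext x
  by_cases hxa : x = a <;> by_cases hxb : x = b <;> simp_all

abbrev BoundaryOrPair (α : Type*) : Type _ := {S : Finset α // S.card = 1 ∨ S.card = 2}

theorem BoundaryOrPair.nonempty {α : Type*} (U : BoundaryOrPair α) : U.1.Nonempty :=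
  card_pos.1 (by rcases U.2 with h | h <;> omega)

section Multiplicity

variable {α : Type*} [DecidableEq α]

-- `D_S = ∑_{{a,b} ⊆ S} D_{{a,b}} + (2 - |S|) ∑_{a ∈ S} D_{{a}}` modulo the lantern relations.
def twistMultiplicity (S U : Finset α) : ℤ :=
  if U ⊆ S then (if U.card = 2 then 1 else 2 - S.card) else 0

theorem twistMultiplicity_singleton (S : Finset α) (u : α) :
    twistMultiplicity S {u} =
      ∑ s ∈ S, (if s = u then 2 else 0) + ∑ s ∈ S, ∑ _t ∈ S, (if s = u then -1 else 0) := by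
  by_cases hu : u ∈ S <;> simp [twistMultiplicity, hu, sub_eq_add_neg]

theorem twistMultiplicity_pair (S : Finset α) {x y : α} (hxy : x ≠ y) :
    twistMultiplicity S {x, y} = ∑ s ∈ S, ∑ t ∈ S, (if s = x ∧ t = y then 1 else 0) := by
  simp [twistMultiplicity, card_pair hxy, insert_subset_iff, ite_and]

theorem satisfiesLantern_twistMultiplicity {U : Finset α} (hU : U.card = 1 ∨ U.card = 2) :
    SatisfiesLantern (twistMultiplicity · U) := by
  rcases hU with hU | hU
  · obtain ⟨u, rfl⟩ := card_eq_one.1 hU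
    simp only [twistMultiplicity_singleton]
    exact (satisfiesLantern_sum _).add (satisfiesLantern_sum_sum _)
  · obtain ⟨x, y, hxy, rfl⟩ := card_eq_two.1 hU
    simp only [twistMultiplicity_pair _ hxy]
    exact satisfiesLantern_sum_sum _

theorem twistMultiplicity_of_card {S U : Finset α} (hS : S.card = 1 ∨ S.card = 2)
    (hU : U.card = 1 ∨ U.card = 2) : twistMultiplicity S U = if S = U then 1 else 0 := by
  by_cases hUS : U ⊆ S
  · rcases hUS.eq_or_ssubset with rfl | hlt
    · rcases hU with hU | hU <;> simp [twistMultiplicity, hU]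
    · have := card_lt_card hlt
      simp [twistMultiplicity, hUS, hlt.ne', show U.card ≠ 2 by omega, show S.card = 2 by omega]
  · rw [twistMultiplicity, if_neg hUS, if_neg (by rintro rfl; exact hUS subset_rfl)]

end Multiplicity

namespace TwistGroup

variable {α G : Type*} [DecidableEq α] [AddCommGroup G]

noncomputable abbrev twistClass (S : Finset α) : TwistGroup α ⧸ lanternRelators α :=
  QuotientAddGroup.mk (Dg S)

noncomputable def lift (f : Finset α → G) : TwistGroup α →+ G :=
  (Finsupp.linearCombination ℤ fun S : {S : Finset α // S.Nonempty} => f S.1).toAddMonoidHom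

theorem lift_Dg (f : Finset α → G) {S : Finset α} (hS : S.Nonempty) : lift f (Dg S) = f S := by
  simp [lift, Dg, hS]

theorem lanternRelators_le_ker_lift {f : Finset α → G} (hf : SatisfiesLantern f) :
    lanternRelators α ≤ (lift f).ker := by
  refine (AddSubgroup.closure_le _).2 ?_
  rintro _ ⟨A, B, C, hA, hB, hC, hAB, hAC, hBC, rfl⟩
  have hAB' : (A ∪ B).Nonempty := hA.mono subset_union_left
  simp only [SetLike.mem_coe, AddMonoidHom.mem_ker, map_sub, map_add, lift_Dg f hA,
    lift_Dg f hB, lift_Dg f hC, lift_Dg f hAB', lift_Dg f (hB.mono subset_union_left),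
    lift_Dg f (hA.mono subset_union_left), lift_Dg f (hAB'.mono subset_union_left),
    hf hAB hAC hBC]
  abel

noncomputable def quotientLift {f : Finset α → G} (hf : SatisfiesLantern f) :
    TwistGroup α ⧸ lanternRelators α →+ G :=
  QuotientAddGroup.lift _ (lift f) (lanternRelators_le_ker_lift hf)

theorem quotientLift_twistClass {f : Finset α → G} (hf : SatisfiesLantern f) {S : Finset α}
    (hS : S.Nonempty) : quotientLift hf (twistClass S) = f S :=
  lift_Dg f hS

theorem twistClass_lantern {A B C : Finset α} (hA : A.Nonempty) (hB : B.Nonempty) (hC : C.Nonempty)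
    (hAB : Disjoint A B) (hAC : Disjoint A C) (hBC : Disjoint B C) :
    twistClass (A ∪ B ∪ C) = twistClass (A ∪ B) + twistClass (B ∪ C) + twistClass (A ∪ C) -
      twistClass A - twistClass B - twistClass C := by
  have hrel : Dg (A ∪ B ∪ C) + Dg A + Dg B + Dg C - Dg (A ∪ B) - Dg (B ∪ C) - Dg (A ∪ C) ∈
      lanternRelators α :=
    AddSubgroup.subset_closure ⟨A, B, C, hA, hB, hC, hAB, hAC, hBC, rfl⟩
  rw [← QuotientAddGroup.eq_zero_iff] at hrel
  simp only [QuotientAddGroup.mk_add, QuotientAddGroup.mk_sub] at hrel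
  linear_combination (norm := abel) hrel

theorem twistClass_mem_span (S : Finset α) :
    twistClass S ∈ Submodule.span ℤ (Set.range fun U : BoundaryOrPair α => twistClass U.1) := by
  obtain ⟨n, hn⟩ : ∃ n, S.card = n := ⟨_, rfl⟩
  induction n using Nat.strong_induction_on generalizing S with
  | _ n ih =>
    rcases lt_or_ge 2 S.card with hS | hS
    · obtain ⟨A, B, C, hA, hB, hC, hAB, hAC, hBC, rfl⟩ := exists_eq_union_of_two_lt_card hS
      have := card_union_of_disjoint (disjoint_union_left.2 ⟨hAC, hBC⟩)
      have := card_union_of_disjoint hAB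
      have := card_union_of_disjoint hAC
      have := card_union_of_disjoint hBC
      have := hA.card_pos; have := hB.card_pos; have := hC.card_pos
      rw [twistClass_lantern hA hB hC hAB hAC hBC]
      refine sub_mem (sub_mem (sub_mem (add_mem (add_mem ?_ ?_) ?_) ?_) ?_) ?_ <;>
        exact ih _ (by omega) _ rfl
    · obtain rfl | hne := S.eq_empty_or_nonempty
      · simp [twistClass, Dg]
      · exact Submodule.subset_span ⟨⟨S, by have := hne.card_pos; omega⟩, rfl⟩

theorem span_range_twistClass :
    Submodule.span ℤ (Set.range fun U : BoundaryOrPair α => twistClass U.1) = ⊤ := by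
  refine Submodule.eq_top_iff'.2 fun x => QuotientAddGroup.induction_on x fun y => ?_
  induction y using Finsupp.induction_linear with
  | zero => exact zero_mem _
  | add f g hf hg => exact add_mem hf hg
  | single S n =>
    have : Finsupp.single S n = n • Dg S.1 := by rw [Dg, dif_pos S.2, Finsupp.smul_single_one]
    rw [this, QuotientAddGroup.mk_zsmul]
    exact Submodule.smul_mem _ _ (twistClass_mem_span _)

theorem linearIndependent_twistClass :
    LinearIndependent ℤ fun U : BoundaryOrPair α => twistClass U.1 := by
  have hf : SatisfiesLantern fun S (U : BoundaryOrPair α) => twistMultiplicity S U.1 :=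
    satisfiesLantern_pi fun U => satisfiesLantern_twistMultiplicity U.2
  refine LinearIndependent.of_comp (quotientLift hf).toIntLinearMap ?_
  convert Pi.linearIndependent_single_one (BoundaryOrPair α) ℤ with U
  · ext V
    simp [quotientLift_twistClass hf U.nonempty, twistMultiplicity_of_card U.2 V.2, Pi.single_apply,
      Subtype.ext_iff, eq_comm]
  · rfl
  · exact Subsingleton.elim _ _

end TwistGroup

theorem pairwise_and_boundary_basis_general {α : Type*} [DecidableEq α] :
    ∃ b : Module.Basis {S : Finset α // S.card = 1 ∨ S.card = 2} ℤ
        (TwistGroup α ⧸ lanternRelators α),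
      ∀ S : {S : Finset α // S.card = 1 ∨ S.card = 2},
        b S = QuotientAddGroup.mk (Dg S.1) :=
  ⟨.mk TwistGroup.linearIndependent_twistClass TwistGroup.span_range_twistClass.ge,
    Module.Basis.mk_apply _ _⟩

/-- The classes of the pairwise generators `D_{{a,b}}` and single-hole (boundary)
generators `D_{{a}}` form a `ℤ`-basis of the abelianized planar mapping class group;
consequently an element is uniquely determined by its multiplicities `{m_a, m_{ab}}`. -/
theorem pairwise_and_boundary_basis {α : Type*} [Fintype α] [DecidableEq α] :
    ∃ b : Module.Basis {S : Finset α // S.card = 1 ∨ S.card = 2} ℤ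
        (TwistGroup α ⧸ lanternRelators α),
      ∀ S : {S : Finset α // S.card = 1 ∨ S.card = 2},
        b S = QuotientAddGroup.mk (Dg S.1) :=
  pairwise_and_boundary_basis_general
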